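/- arXiv:2005.12614 — 2 statements merged into one kernel-verified Lean document; each statement's English description precedes it below -/
import Mathlib

section
/- For a > 0 and r ≥ 0 with r ≠ a, the integral (2/3) ∫₀^{2π} (r cos θ - a)/(r² + a² - 2ra cos θ) dθ equals (2π/(3a))(sgn(r-a) - 1). -/
open Real

open Complex in
lemma aux_ne_zero (a r : ℝ) (ha : 0 < a) (hr : 0 ≤ r) (hra : r ≠ a) (θ : ℝ) :
    (r : ℂ) * Complex.exp (θ * Complex.I) - a ≠ 0 := by
  intro h
  have h2 : ‖(r : ℂ) * Complex.exp (θ * Complex.I)‖ = ‖(a : ℂ)‖ := by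
    rw [sub_eq_zero] at h; rw [h]
  simp [Complex.norm_exp, _root_.abs_of_nonneg hr] at h2
  rw [_root_.abs_of_pos ha] at h2
  exact hra h2

open Complex in
lemma aux_J (a r : ℝ) (ha : 0 < a) (hr : 0 < r) (hra : r ≠ a) :
    ∫ θ in (0:ℝ)..(2 * π), ((r : ℂ) * Complex.exp (θ * Complex.I) - a)⁻¹
      = if r < a then (-2 * π / a : ℂ) else 0 := by
  have hane : (a : ℂ) ≠ 0 := Complex.ofReal_ne_zero.mpr ha.ne'
  -- circle integrability of the two pieces
  have hint1 : CircleIntegrable (fun z => (z - (a : ℂ))⁻¹) 0 r := by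
    rw [circleIntegrable_sub_inv_iff]
    right
    intro hmem
    have : ‖(a : ℂ) - 0‖ = |r| := by simpa [Metric.mem_sphere, Complex.dist_eq] using hmem
    rw [sub_zero, Complex.norm_real, Real.norm_eq_abs, _root_.abs_of_pos ha, _root_.abs_of_pos hr] at this
    exact hra this.symm
  have hint2 : CircleIntegrable (fun z => (z - (0 : ℂ))⁻¹) 0 r := by
    rw [circleIntegrable_sub_inv_iff]
    right
    intro hmem
    have : ‖(0 : ℂ) - 0‖ = |r| := by simpa [Metric.mem_sphere, Complex.dist_eq] using hmem
    simp [_root_.abs_of_pos hr] at this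
    exact hr.ne' this.symm
  -- the circle integral of the difference
  have hK : (∮ z in C(0, r), ((z - (a:ℂ))⁻¹ - (z - 0)⁻¹))
      = (∮ z in C(0, r), (z - (a:ℂ))⁻¹) - ∮ z in C(0, r), (z - (0:ℂ))⁻¹ :=
    circleIntegral.integral_sub hint1 hint2
  -- unfold and identify with I * a * J
  have hunfold : (∮ z in C(0, r), ((z - (a:ℂ))⁻¹ - (z - 0)⁻¹))
      = (Complex.I * a) * ∫ θ in (0:ℝ)..(2 * π), ((r : ℂ) * Complex.exp (θ * Complex.I) - a)⁻¹ := by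
    rw [circleIntegral, ← intervalIntegral.integral_const_mul]
    refine intervalIntegral.integral_congr fun θ _ => ?_
    have hz : circleMap 0 r θ = (r : ℂ) * Complex.exp (θ * Complex.I) := by
      simp [circleMap]
    have hzne : (r : ℂ) * Complex.exp (θ * Complex.I) ≠ 0 := by
      exact mul_ne_zero (Complex.ofReal_ne_zero.mpr hr.ne') (Complex.exp_ne_zero _)
    have hzane := aux_ne_zero a r ha hr.le hra θ
    rw [deriv_circleMap, hz, smul_eq_mul]
    rw [sub_zero]
    field_simp
    have hr' : (r : ℂ) ≠ 0 := Complex.ofReal_ne_zero.mpr hr.ne'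
    field_simp
    ring
  -- compute the two circle integrals
  have hzero : (∮ z in C(0, r), (z - (0:ℂ))⁻¹) = 2 * π * Complex.I :=
    circleIntegral.integral_sub_inv_of_mem_ball (by simpa using hr)
  by_cases hlt : r < a
  · -- a outside the disk: Cauchy-Goursat gives 0
    have ha0 : (∮ z in C(0, r), (z - (a:ℂ))⁻¹) = 0 := by
      apply Complex.circleIntegral_eq_zero_of_differentiable_on_off_countable hr.le
        Set.countable_empty
      · apply ContinuousOn.inv₀ (by fun_prop)
        intro z hz h0
        have : z = (a : ℂ) := sub_eq_zero.mp h0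
        subst this
        have : ‖(a : ℂ)‖ ≤ r := by simpa using hz
        rw [Complex.norm_real, Real.norm_eq_abs, abs_of_pos ha] at this
        exact absurd this (not_le.mpr hlt)
      · intro z hz
        apply DifferentiableAt.inv (by fun_prop)
        intro h0
        have : z = (a : ℂ) := sub_eq_zero.mp h0
        subst this
        have : ‖(a : ℂ)‖ < r := by simpa [Metric.mem_ball] using hz.1
        rw [Complex.norm_real, Real.norm_eq_abs, abs_of_pos ha] at this
        exact absurd this (not_lt.mpr hlt.le)
    rw [hunfold] at hK
    rw [ha0, hzero, zero_sub] at hK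
    rw [if_pos hlt]
    have hIa : (Complex.I * (a:ℂ)) ≠ 0 := mul_ne_zero Complex.I_ne_zero hane
    apply mul_left_cancel₀ hIa
    rw [hK]
    field_simp
  · -- r > a : a inside the disk
    have hgt : a < r := lt_of_le_of_ne (not_lt.mp hlt) (Ne.symm hra)
    have ha2 : (∮ z in C(0, r), (z - (a:ℂ))⁻¹) = 2 * π * Complex.I := by
      apply circleIntegral.integral_sub_inv_of_mem_ball
      simp [Metric.mem_ball, Complex.dist_eq, Complex.norm_real, abs_of_pos ha, hgt]
    rw [hunfold, ha2, hzero, sub_self] at hK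
    rw [if_neg hlt]
    have hIa : (Complex.I * (a:ℂ)) ≠ 0 := mul_ne_zero Complex.I_ne_zero hane
    exact (mul_eq_zero.mp hK).resolve_left hIa

theorem stmt_4 (a r : ℝ) (ha : 0 < a) (hr : 0 ≤ r) (hra : r ≠ a) :
    (2 / 3) * ∫ θ in (0:ℝ)..(2 * π),
        (r * Real.cos θ - a) / (r ^ 2 + a ^ 2 - 2 * r * a * Real.cos θ)
      = (2 * π / (3 * a)) * (Real.sign (r - a) - 1) := by
  -- the real integrand is the real part of the complex one
  have key : ∀ θ : ℝ, (r * Real.cos θ - a) / (r ^ 2 + a ^ 2 - 2 * r * a * Real.cos θ)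
      = Complex.reCLM (((r : ℂ) * Complex.exp (θ * Complex.I) - a)⁻¹) := by
    intro θ
    have hre : ((r : ℂ) * Complex.exp (θ * Complex.I) - a).re = r * Real.cos θ - a := by
      simp [Complex.exp_ofReal_mul_I_re]
    have him : ((r : ℂ) * Complex.exp (θ * Complex.I) - a).im = r * Real.sin θ := by
      simp [Complex.exp_ofReal_mul_I_im]
    have hnsq : Complex.normSq ((r : ℂ) * Complex.exp (θ * Complex.I) - a)
        = r ^ 2 + a ^ 2 - 2 * r * a * Real.cos θ := by
      rw [Complex.normSq_apply, hre, him]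
      have := Real.sin_sq_add_cos_sq θ
      nlinarith [Real.sin_sq_add_cos_sq θ]
    simp only [Complex.reCLM_apply, Complex.inv_re, hre, hnsq]
  rcases eq_or_lt_of_le hr with hr0 | hr0
  · -- r = 0
    subst hr0
    have : ∀ θ ∈ Set.uIcc (0:ℝ) (2*π),
        ((0:ℝ) * Real.cos θ - a) / ((0:ℝ) ^ 2 + a ^ 2 - 2 * 0 * a * Real.cos θ) = -a⁻¹ := by
      intro θ _
      field_simp
      ring
    rw [intervalIntegral.integral_congr this, intervalIntegral.integral_const]
    rw [Real.sign_of_neg (by linarith)]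
    have ha' : a ≠ 0 := ha.ne'
    field_simp
    ring_nf
    rw [mul_inv_cancel₀ ha']
    ring
  · -- r > 0
    have hcont : Continuous fun θ : ℝ => ((r : ℂ) * Complex.exp (θ * Complex.I) - a)⁻¹ := by
      apply Continuous.inv₀ (by fun_prop)
      exact fun θ => aux_ne_zero a r ha hr hra θ
    have hint : IntervalIntegrable (fun θ : ℝ => ((r : ℂ) * Complex.exp (θ * Complex.I) - a)⁻¹)
        MeasureTheory.volume 0 (2 * π) := hcont.intervalIntegrable _ _
    have hcomm := Complex.reCLM.intervalIntegral_comp_comm hint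
    calc (2 / 3) * ∫ θ in (0:ℝ)..(2 * π),
        (r * Real.cos θ - a) / (r ^ 2 + a ^ 2 - 2 * r * a * Real.cos θ)
        = (2 / 3) * ∫ θ in (0:ℝ)..(2 * π),
            Complex.reCLM (((r : ℂ) * Complex.exp (θ * Complex.I) - a)⁻¹) := by
          rw [intervalIntegral.integral_congr fun θ _ => key θ]
      _ = (2 / 3) * Complex.reCLM
            (∫ θ in (0:ℝ)..(2 * π), ((r : ℂ) * Complex.exp (θ * Complex.I) - a)⁻¹) := by
          rw [hcomm]
      _ = (2 * π / (3 * a)) * (Real.sign (r - a) - 1) := by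
          rw [aux_J a r ha hr0 hra]
          by_cases hlt : r < a
          · rw [if_pos hlt, Real.sign_of_neg (by linarith)]
            have : Complex.reCLM ((-2 * π / a : ℂ)) = -2 * π / a := by
              norm_cast
            push_cast [this]
            field_simp
            ring
          · have hgt : a < r := lt_of_le_of_ne (not_lt.mp hlt) (Ne.symm hra)
            rw [if_neg hlt, Real.sign_of_pos (by linarith)]
            simp
end

section
/- For a > 0, r ≥ 0 with r ≠ a, and any φ ∈ ℝ, the integral (4/3) ∫₀^{2π} (r cos φ - a cos ν cos φ + a sin ν sin φ)² (r cos ν - a) / (r² + a² - 2ra cos ν)² dν equals (2π/(3a))(sgn(r-a) - 1); in particular it is independent of φ. -/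
open Real

set_option maxHeartbeats 1600000

lemma arctan_deriv (p q : ℝ) (hp : 0 ≤ p) (hpq : p < q) (ν : ℝ) :
    HasDerivAt (fun ν => ν + 2 * Real.arctan (p * Real.sin ν / (q - p * Real.cos ν)))
      ((q^2 - p^2) / (q^2 + p^2 - 2*q*p*Real.cos ν)) ν := by
  have hq0 : 0 < q := lt_of_le_of_lt hp hpq
  have hden : 0 < q - p * Real.cos ν := by
    nlinarith [mul_le_mul_of_nonneg_left (Real.cos_le_one ν) hp]
  have hqp : 0 < (q - p)^2 := pow_pos (sub_pos.mpr hpq) 2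
  have hD : 0 < q^2 + p^2 - 2*q*p*Real.cos ν := by
    nlinarith [mul_nonneg (mul_nonneg hq0.le hp) (sub_nonneg.mpr (Real.cos_le_one ν))]
  have h1 : HasDerivAt (fun ν => p * Real.sin ν) (p * Real.cos ν) ν :=
    (Real.hasDerivAt_sin ν).const_mul p
  have h2 : HasDerivAt (fun ν => q - p * Real.cos ν) (p * Real.sin ν) ν := by
    simpa using ((Real.hasDerivAt_cos ν).const_mul p).const_sub q
  have h3 := ((h1.div h2 hden.ne').arctan).const_mul 2
  have h4 := (hasDerivAt_id ν).add h3
  refine h4.congr_deriv (Eq.symm ?_)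
  have hs := Real.sin_sq_add_cos_sq ν
  simp only [Pi.div_apply]
  have hD' : q ^ 2 + p ^ 2 - q * p * 2 * Real.cos ν ≠ 0 := by convert hD.ne' using 1; ring
  field_simp
  ring_nf
  rw [Real.sin_sq]
  ring

theorem alg_key (a r cφ sφ c s : ℝ) (ha : a ≠ 0) (hr : r ≠ 0)
    (hd : r^2+a^2-2*r*a*c ≠ 0) (hs : s^2 = 1-c^2) (hsφ : sφ^2 = 1-cφ^2) :
    (r*cφ - a*c*cφ + a*s*sφ)^2 * (r*c - a)/(r^2+a^2-2*r*a*c)^2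
      = (r^2-a^2)/(r^2+a^2-2*r*a*c)/(4*a) + (cφ^2-sφ^2)/(4*r) * c - 1/(4*a)
        + (cφ^2-sφ^2)*(r^2-a^2)/(4*r) * ((c*(r^2+a^2-2*r*a*c) - s*(2*r*a*s))/(r^2+a^2-2*r*a*c)^2)
        + sφ*cφ/(2*r) * (-s)
        - sφ*cφ*(r^2-a^2)^2/(4*r^2*a) * ((0*(r^2+a^2-2*r*a*c) - 1*(2*r*a*s))/(r^2+a^2-2*r*a*c)^2) := by
  field_simp
  have hd' : r ^ 2 + a ^ 2 - r * a * c * 2 ≠ 0 := by convert hd using 1; ring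
  field_simp
  ring_nf
  rw [hs, hsφ]
  ring


lemma main_int (a r φ : ℝ) (ha : 0 < a) (hr0 : 0 < r) (hra : r ≠ a)
    (W : ℝ → ℝ)
    (hW : ∀ ν, HasDerivAt W ((r^2 - a^2) / (r^2 + a^2 - 2*r*a*Real.cos ν)) ν) :
    (∫ ν in (0:ℝ)..(2 * π),
        (r * Real.cos φ - a * Real.cos ν * Real.cos φ + a * Real.sin ν * Real.sin φ) ^ 2
          * (r * Real.cos ν - a)
          / (r ^ 2 + a ^ 2 - 2 * r * a * Real.cos ν) ^ 2)
      = (W (2*π) - W 0 - 2*π) / (4*a) := by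
  have hD : ∀ ν : ℝ, 0 < r ^ 2 + a ^ 2 - 2 * r * a * Real.cos ν := by
    intro ν
    have hne := sub_ne_zero.mpr hra
    have h1 : 0 < (r - a)^2 := by positivity
    nlinarith [mul_nonneg (mul_nonneg hr0.le ha.le) (sub_nonneg.mpr (Real.cos_le_one ν))]
  set F : ℝ → ℝ := fun ν => W ν / (4*a)
      + (Real.cos φ^2 - Real.sin φ^2)/(4*r) * Real.sin ν
      - ν/(4*a)
      + (Real.cos φ^2 - Real.sin φ^2)*(r^2-a^2)/(4*r)
          * (Real.sin ν / (r^2+a^2-2*r*a*Real.cos ν))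
      + (Real.sin φ * Real.cos φ)/(2*r) * Real.cos ν
      - Real.sin φ * Real.cos φ * (r^2-a^2)^2/(4*r^2*a)
          * (1/(r^2+a^2-2*r*a*Real.cos ν)) with hFdef
  have hF : ∀ ν : ℝ, HasDerivAt F
      ((r * Real.cos φ - a * Real.cos ν * Real.cos φ + a * Real.sin ν * Real.sin φ) ^ 2
          * (r * Real.cos ν - a)
          / (r ^ 2 + a ^ 2 - 2 * r * a * Real.cos ν) ^ 2) ν := by
    intro ν
    have hDf : HasDerivAt (fun ν => r^2+a^2-2*r*a*Real.cos ν) (2*r*a*Real.sin ν) ν := by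
      have h := ((Real.hasDerivAt_cos ν).const_mul (2*r*a)).const_sub (r^2+a^2)
      exact h.congr_deriv (by ring)
    have h1 := (hW ν).div_const (4*a)
    have h2 := (Real.hasDerivAt_sin ν).const_mul ((Real.cos φ^2 - Real.sin φ^2)/(4*r))
    have h3 := (hasDerivAt_id ν).div_const (4*a)
    have h4 := ((Real.hasDerivAt_sin ν).div hDf (hD ν).ne').const_mul
        ((Real.cos φ^2 - Real.sin φ^2)*(r^2-a^2)/(4*r))
    have h5 := (Real.hasDerivAt_cos ν).const_mul ((Real.sin φ * Real.cos φ)/(2*r))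
    have h6 := ((hasDerivAt_const ν (1:ℝ)).div hDf (hD ν).ne').const_mul
        (Real.sin φ * Real.cos φ * (r^2-a^2)^2/(4*r^2*a))
    have h := (((((h1.add h2).sub h3).add h4).add h5).sub h6)
    refine h.congr_deriv (Eq.symm ?_)
    exact alg_key a r (Real.cos φ) (Real.sin φ) (Real.cos ν) (Real.sin ν)
      ha.ne' hr0.ne' (hD ν).ne' (Real.sin_sq ν) (Real.sin_sq φ)
  have hcont : Continuous (fun ν =>
      (r * Real.cos φ - a * Real.cos ν * Real.cos φ + a * Real.sin ν * Real.sin φ) ^ 2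
          * (r * Real.cos ν - a)
          / (r ^ 2 + a ^ 2 - 2 * r * a * Real.cos ν) ^ 2) := by
    apply Continuous.div
    · fun_prop
    · fun_prop
    · intro x; exact pow_ne_zero 2 (hD x).ne'
  rw [intervalIntegral.integral_eq_sub_of_hasDerivAt (fun ν _ => hF ν)
      (hcont.intervalIntegrable 0 (2*π))]
  simp only [hFdef, Real.sin_two_pi, Real.cos_two_pi, Real.sin_zero, Real.cos_zero]
  ring


theorem stmt_5 (a r φ : ℝ) (ha : 0 < a) (hr : 0 ≤ r) (hra : r ≠ a) :
    (4 / 3) * ∫ ν in (0:ℝ)..(2 * π),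
        (r * Real.cos φ - a * Real.cos ν * Real.cos φ + a * Real.sin ν * Real.sin φ) ^ 2
          * (r * Real.cos ν - a)
          / (r ^ 2 + a ^ 2 - 2 * r * a * Real.cos ν) ^ 2
      = (2 * π / (3 * a)) * (Real.sign (r - a) - 1) := by
  rcases hr.eq_or_lt with h0 | h0
  · -- r = 0
    subst h0
    have hsgn : Real.sign ((0:ℝ) - a) = -1 := Real.sign_of_neg (by linarith)
    rw [hsgn]
    have hF : ∀ ν : ℝ, HasDerivAt (fun ν => -(ν + Real.sin (ν+φ) * Real.cos (ν+φ))/(2*a))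
        (((0:ℝ) * Real.cos φ - a * Real.cos ν * Real.cos φ + a * Real.sin ν * Real.sin φ) ^ 2
          * ((0:ℝ) * Real.cos ν - a)
          / ((0:ℝ) ^ 2 + a ^ 2 - 2 * 0 * a * Real.cos ν) ^ 2) ν := by
      intro ν
      have hid : HasDerivAt (fun ν : ℝ => ν + φ) 1 ν := by
        simpa using (hasDerivAt_id ν).add_const φ
      have hs : HasDerivAt (fun ν => Real.sin (ν+φ)) (Real.cos (ν+φ)) ν := by
        exact hid.sin.congr_deriv (mul_one _)
      have hc : HasDerivAt (fun ν => Real.cos (ν+φ)) (-Real.sin (ν+φ)) ν := by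
        exact hid.cos.congr_deriv (by ring)
      have h := (((hasDerivAt_id ν).add (hs.mul hc)).neg).div_const (2*a)
      refine h.congr_deriv (Eq.symm ?_)
      rw [Real.sin_add, Real.cos_add]
      have h1 := Real.sin_sq_add_cos_sq ν
      have h2 := Real.sin_sq_add_cos_sq φ
      field_simp
      linear_combination (-(a^4)*(Real.sin φ^2 + Real.cos φ^2)) * h1 - a^4 * h2
    have hcont : Continuous (fun ν =>
        ((0:ℝ) * Real.cos φ - a * Real.cos ν * Real.cos φ + a * Real.sin ν * Real.sin φ) ^ 2
          * ((0:ℝ) * Real.cos ν - a)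
          / ((0:ℝ) ^ 2 + a ^ 2 - 2 * 0 * a * Real.cos ν) ^ 2) := by
      apply Continuous.div
      · fun_prop
      · fun_prop
      · intro x
        have : (0:ℝ) ^ 2 + a ^ 2 - 2 * 0 * a * Real.cos x = a^2 := by ring
        rw [this]
        positivity
    rw [intervalIntegral.integral_eq_sub_of_hasDerivAt (fun ν _ => hF ν)
        (hcont.intervalIntegrable 0 (2*π))]
    have e1 : Real.sin (2*π+φ) = Real.sin φ := by
      rw [Real.sin_add]; simp
    have e2 : Real.cos (2*π+φ) = Real.cos φ := by
      rw [Real.cos_add]; simp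
    rw [e1, e2]
    simp only [zero_add]
    field_simp
    ring
  · rcases lt_or_gt_of_ne hra with hlt | hgt
    · -- 0 < r < a
      set W : ℝ → ℝ := fun ν => -(ν + 2 * Real.arctan (r * Real.sin ν / (a - r * Real.cos ν)))
        with hWdef
      have hW : ∀ ν, HasDerivAt W ((r^2 - a^2) / (r^2 + a^2 - 2*r*a*Real.cos ν)) ν := by
        intro ν
        have h := (arctan_deriv r a h0.le hlt ν).neg
        refine h.congr_deriv (Eq.symm ?_)
        rw [← neg_div, neg_sub]
        congr 1
        ring
      rw [main_int a r φ ha h0 hra W hW]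
      have hsgn : Real.sign (r - a) = -1 := Real.sign_of_neg (by linarith)
      rw [hsgn]
      have hW0 : W 0 = 0 := by simp [hWdef]
      have hW2 : W (2*π) = -(2*π) := by simp [hWdef]
      rw [hW0, hW2]
      field_simp
      ring
    · -- a < r
      set W : ℝ → ℝ := fun ν => ν + 2 * Real.arctan (a * Real.sin ν / (r - a * Real.cos ν))
        with hWdef
      have hW : ∀ ν, HasDerivAt W ((r^2 - a^2) / (r^2 + a^2 - 2*r*a*Real.cos ν)) ν := by
        intro ν
        exact arctan_deriv a r ha.le hgt ν
      rw [main_int a r φ ha h0 hra W hW]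
      have hsgn : Real.sign (r - a) = 1 := Real.sign_of_pos (by linarith)
      rw [hsgn]
      have hW0 : W 0 = 0 := by simp [hWdef]
      have hW2 : W (2*π) = 2*π := by simp [hWdef]
      rw [hW0, hW2]
      simp
end
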